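/- arXiv:1208.4884 — 2 statements merged into one kernel-verified Lean document; each statement's English description precedes it below -/
import Mathlib

section
/- Let ξ(z; a) be the quadratic expression (z_{21}+z_{22}+z_{23}-a_3-a_4-a_5)^2 + (z_{41}+z_{42}+z_{43}-a_3-a_4-a_5)^2 + (z_{32}+z_{34}-z_{43}-a_4)^2 + (z_{33}+z_{34}-z_{23}-a_4)^2 + (z_{41}-a_5)^2 + (z_{21}-a_5)^2 + (z_{22}-z_{33})^2 + (z_{32}-z_{42})^2 + (z_{31}+z_{32}-a_4-a_5)^2 + (z_{31}+z_{33}-a_4-a_5)^2 - (z_{32}-z_{33})^2, where all variables are integers. Then ξ(z; a) ≥ 0 for all integer values of the variables. -/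
/-!
With `A = z₃₂ - z₃₃`, the form `ξ` is `∑ xᵢ² + y₁² + y₂² - A²` for eight integer linear forms `xᵢ`
summing to `2A` and two forms `yⱼ` summing to `A`. By Cauchy–Schwarz each of the two families has
square sum at least `A² / 2`, so `ξ ≥ 0`.
-/

open Finset

theorem sq_le_two_mul_sum_sq_of_sum_eq {ι R : Type*} [CommRing R] [LinearOrder R]
    [IsStrictOrderedRing R] (s : Finset ι) (x : ι → R) {k : ℕ} {A : R} (hk : k ≠ 0)
    (hcard : #s = 2 * k ^ 2) (hsum : ∑ i ∈ s, x i = k * A) :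
    A ^ 2 ≤ 2 * ∑ i ∈ s, x i ^ 2 := by
  have hcs := sq_sum_le_card_mul_sum_sq (s := s) (f := x)
  rw [hsum, hcard] at hcs
  push_cast at hcs
  have hk2 : (0 : R) < (k : R) ^ 2 := by positivity
  refine le_of_mul_le_mul_left ?_ hk2
  linarith

/-- The sum-of-squares form of the exponent ξ is nonnegative for all integer values. -/
theorem stmt12 (z21 z22 z23 z31 z32 z33 z34 z41 z42 z43 a3 a4 a5 : ℤ) :
    0 ≤ (z21+z22+z23-a3-a4-a5)^2 + (z41+z42+z43-a3-a4-a5)^2 + (z32+z34-z43-a4)^2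
      + (z33+z34-z23-a4)^2 + (z41-a5)^2 + (z21-a5)^2 + (z22-z33)^2 + (z32-z42)^2
      + (z31+z32-a4-a5)^2 + (z31+z33-a4-a5)^2 - (z32-z33)^2 := by
  set A := z32 - z33
  let x : Fin 8 → ℤ := ![a3+a4+a5-(z21+z22+z23), z41+z42+z43-(a3+a4+a5), z32+z34-z43-a4,
    z23+a4-(z33+z34), a5-z41, z21-a5, z22-z33, z32-z42]
  let y : Fin 2 → ℤ := ![z31+z32-a4-a5, a4+a5-(z31+z33)]
  have hx : A ^ 2 ≤ 2 * ∑ i, x i ^ 2 :=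
    sq_le_two_mul_sum_sq_of_sum_eq _ x (k := 2) two_ne_zero rfl
      (by simp only [x, Fin.sum_univ_eight, Matrix.cons_val, A]; ring)
  have hy : A ^ 2 ≤ 2 * ∑ j, y j ^ 2 :=
    sq_le_two_mul_sum_sq_of_sum_eq _ y (k := 1) one_ne_zero rfl
      (by simp only [y, Fin.sum_univ_two, Matrix.cons_val, A]; ring)
  simp only [x, y, Fin.sum_univ_eight, Fin.sum_univ_two, Matrix.cons_val] at hx hy
  linarith
end

section
/- For any real numbers x_1, ..., x_8, y_1, y_2: if x_1 + ... + x_8 = 2(y_1 + y_2), then x_1^2 + ... + x_8^2 + y_1^2 + y_2^2 ≥ (y_1 + y_2)^2, with equality if and only if all x_i equal (y_1+y_2)/4 and y_1 = y_2. -/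
/-! With `A = y₁ + y₂`, completing squares gives the identity
`∑ xᵢ² + y₁² + y₂² - A² = ∑ (xᵢ - A/4)² + (y₁ - y₂)²/2` on the hyperplane `∑ xᵢ = 2A`
(eight terms make `8 (A/4)² = A²/2` and `y₁² + y₂² = A²/2 + (y₁ - y₂)²/2`), and a sum of
squares vanishes only when every square does. -/

open Finset

theorem Finset.sum_sub_const_sq {ι R : Type*} [CommRing R] (s : Finset ι) (x : ι → R) (c : R) :
    ∑ i ∈ s, (x i - c) ^ 2 = ∑ i ∈ s, x i ^ 2 - 2 * c * ∑ i ∈ s, x i + #s * c ^ 2 := by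
  simp only [sub_sq, sum_add_distrib, sum_sub_distrib, ← sum_mul, ← mul_sum, sum_const,
    nsmul_eq_mul]
  ring

section EightSquares

variable {ι : Type*} [Fintype ι] (x : ι → ℝ) (y₁ y₂ : ℝ)

theorem sum_sq_add_sq_add_sq_sub_sq_eq (hι : Fintype.card ι = 8)
    (h : ∑ i, x i = 2 * (y₁ + y₂)) :
    ∑ i, x i ^ 2 + y₁ ^ 2 + y₂ ^ 2 - (y₁ + y₂) ^ 2 =
      ∑ i, (x i - (y₁ + y₂) / 4) ^ 2 + (y₁ - y₂) ^ 2 / 2 := by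
  rw [sum_sub_const_sq, h, card_univ, hι]
  push_cast
  ring

theorem sq_le_sum_sq_add_sq_add_sq (hι : Fintype.card ι = 8)
    (h : ∑ i, x i = 2 * (y₁ + y₂)) :
    (y₁ + y₂) ^ 2 ≤ ∑ i, x i ^ 2 + y₁ ^ 2 + y₂ ^ 2 := by
  rw [← sub_nonneg, sum_sq_add_sq_add_sq_sub_sq_eq x y₁ y₂ hι h]
  positivity

theorem sum_sq_add_sq_add_sq_eq_sq_iff (hι : Fintype.card ι = 8)
    (h : ∑ i, x i = 2 * (y₁ + y₂)) :
    ∑ i, x i ^ 2 + y₁ ^ 2 + y₂ ^ 2 = (y₁ + y₂) ^ 2 ↔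
      (∀ i, x i = (y₁ + y₂) / 4) ∧ y₁ = y₂ := by
  rw [← sub_eq_zero, sum_sq_add_sq_add_sq_sub_sq_eq x y₁ y₂ hι h,
    add_eq_zero_iff_of_nonneg (by positivity) (by positivity),
    sum_eq_zero_iff_of_nonneg fun i _ => sq_nonneg _]
  simp only [mem_univ, true_implies, div_eq_zero_iff, pow_eq_zero_iff two_ne_zero, sub_eq_zero,
    two_ne_zero, or_false]

end EightSquares

/-- If x₁ + ⋯ + x₈ = 2(y₁ + y₂), then x₁² + ⋯ + x₈² + y₁² + y₂² ≥ (y₁ + y₂)², with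
equality iff all xᵢ equal (y₁+y₂)/4 and y₁ = y₂. -/
theorem stmt18 (x₁ x₂ x₃ x₄ x₅ x₆ x₇ x₈ y₁ y₂ : ℝ)
    (h : x₁ + x₂ + x₃ + x₄ + x₅ + x₆ + x₇ + x₈ = 2 * (y₁ + y₂)) :
    (x₁^2 + x₂^2 + x₃^2 + x₄^2 + x₅^2 + x₆^2 + x₇^2 + x₈^2 + y₁^2 + y₂^2 ≥ (y₁ + y₂)^2) ∧
    (x₁^2 + x₂^2 + x₃^2 + x₄^2 + x₅^2 + x₆^2 + x₇^2 + x₈^2 + y₁^2 + y₂^2 = (y₁ + y₂)^2 ↔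
      (x₁ = (y₁ + y₂) / 4 ∧ x₂ = (y₁ + y₂) / 4 ∧ x₃ = (y₁ + y₂) / 4 ∧ x₄ = (y₁ + y₂) / 4 ∧
       x₅ = (y₁ + y₂) / 4 ∧ x₆ = (y₁ + y₂) / 4 ∧ x₇ = (y₁ + y₂) / 4 ∧ x₈ = (y₁ + y₂) / 4 ∧
       y₁ = y₂)) := by
  set x : Fin 8 → ℝ := ![x₁, x₂, x₃, x₄, x₅, x₆, x₇, x₈]
  have hx : ∑ i, x i = 2 * (y₁ + y₂) := by simpa [x, Fin.sum_univ_eight] using h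
  have hcard : Fintype.card (Fin 8) = 8 := Fintype.card_fin 8
  have hle := sq_le_sum_sq_add_sq_add_sq x y₁ y₂ hcard hx
  have heq := sum_sq_add_sq_add_sq_eq_sq_iff x y₁ y₂ hcard hx
  simp only [x, Fin.sum_univ_eight, Fin.forall_fin_succ, IsEmpty.forall_iff, Matrix.cons_val_zero,
    Matrix.cons_val_succ, and_true, and_assoc] at hle heq
  exact ⟨hle, heq⟩
end
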